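/- arXiv:1401.4781 — 3 statements merged into one kernel-verified Lean document; each statement's English description precedes it below -/
import Mathlib

section
/- For real σ₀ with 1/2 < σ₀ < 1 and real T ≥ 2, one has ∑_{1 ≤ n < m < T} (n m)^(-σ₀) ≤ T^(2(1-σ₀))/(2(1-σ₀)²) − σ₀ T^(1-σ₀)/(1-σ₀)² + σ₀²/(2(1-σ₀)²) − ζ(2σ₀)/2 − T^(1-2σ₀)/(2(1-2σ₀)) + T^(-2σ₀)/2. -/
/-!
Write `f n = n ^ (-σ₀)` and `M = ⌈T⌉₊`, so that the double sum is `(S ^ 2 - Q) / 2` with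
`S = ∑_{1 ≤ n < M} f n` and `Q = ∑_{1 ≤ n < M} f n ^ 2`. Comparing `S` with `∫₁ᵀ x ^ (-σ₀) dx`
gives `S ≤ (T ^ (1 - σ₀) - σ₀) / (1 - σ₀)`, and comparing the tail `∑_{n > M} n ^ (-2σ₀)` of
`ζ(2σ₀)` with `∫_M^∞ x ^ (-2σ₀) dx` gives `Q ≥ ζ(2σ₀) - T ^ (-2σ₀) - T ^ (1 - 2σ₀) / (2σ₀ - 1)`.
-/

open Finset Real

theorem two_mul_sum_Ico_sum_Ico_mul {R : Type*} [CommRing R] (f : ℕ → R) (a b : ℕ) :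
    2 * ∑ m ∈ Ico a b, ∑ n ∈ Ico a m, f n * f m
      = (∑ i ∈ Ico a b, f i) ^ 2 - ∑ i ∈ Ico a b, f i ^ 2 := by
  induction b with
  | zero => simp
  | succ b ih =>
    by_cases hab : a ≤ b
    · rw [sum_Ico_succ_top hab, sum_Ico_succ_top hab, sum_Ico_succ_top hab, mul_add, ih,
        ← sum_mul]
      ring
    · simp [Ico_eq_empty_of_le (Nat.succ_le_of_lt (not_le.1 hab))]

theorem sum_Ico_one_rpow_neg_le {σ : ℝ} (hσ₀ : 0 ≤ σ) (hσ₁ : σ ≠ 1) {N : ℕ} (hN : 1 ≤ N) :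
    ∑ n ∈ Ico 1 (N + 1), (n : ℝ) ^ (-σ) ≤ ((N : ℝ) ^ (1 - σ) - σ) / (1 - σ) := by
  have hanti : AntitoneOn (fun x : ℝ ↦ x ^ (-σ)) (Set.Icc (1 : ℕ) N) := fun x hx y _ hxy ↦
    rpow_le_rpow_of_nonpos (lt_of_lt_of_le (by norm_num) hx.1) hxy (neg_nonpos.2 hσ₀)
  have hint : ∫ x in (1 : ℝ)..N, x ^ (-σ) = ((N : ℝ) ^ (1 - σ) - 1) / (1 - σ) := by
    rw [integral_rpow (Or.inr ⟨by contrapose! hσ₁; linarith, by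
      rw [Set.uIcc_of_le (by exact_mod_cast hN)]; simp⟩)]
    simp [sub_eq_neg_add]
  have hne : 1 - σ ≠ 0 := sub_ne_zero.2 (Ne.symm hσ₁)
  calc ∑ n ∈ Ico 1 (N + 1), (n : ℝ) ^ (-σ)
      = 1 + ∑ n ∈ Ico 1 N, ((n + 1 : ℕ) : ℝ) ^ (-σ) := by
        rw [sum_eq_sum_Ico_succ_bot (by omega), sum_Ico_add' (fun n : ℕ ↦ (n : ℝ) ^ (-σ))]
        simp
    _ ≤ 1 + ∫ x in (1 : ℝ)..N, x ^ (-σ) := by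
        gcongr; exact_mod_cast hanti.sum_le_integral_Ico hN
    _ = ((N : ℝ) ^ (1 - σ) - σ) / (1 - σ) := by rw [hint]; field_simp; ring

theorem sum_Ico_ceil_rpow_neg_le {σ x : ℝ} (hσ₀ : 0 ≤ σ) (hσ₁ : σ < 1) (hx : 1 ≤ x) :
    ∑ n ∈ Ico 1 ⌈x⌉₊, (n : ℝ) ^ (-σ) ≤ (x ^ (1 - σ) - σ) / (1 - σ) := by
  have hσ : 0 < 1 - σ := by linarith
  obtain ⟨N, hN⟩ : ∃ N, ⌈x⌉₊ = N + 1 :=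
    Nat.exists_eq_succ_of_ne_zero (Nat.ceil_pos.2 (by linarith)).ne'
  have hNx : (N : ℝ) < x := Nat.lt_ceil.1 (by omega)
  rw [hN]
  rcases Nat.eq_zero_or_pos N with rfl | hN₀
  · have := one_le_rpow hx hσ.le
    simp only [zero_add, Ico_self, sum_empty]
    exact div_nonneg (by linarith) hσ.le
  · refine (sum_Ico_one_rpow_neg_le hσ₀ hσ₁.ne hN₀).trans ?_
    gcongr

theorem riemannZeta_ofReal_re_eq_tsum {s : ℝ} (hs : 1 < s) :
    (riemannZeta s).re = ∑' n : ℕ, (n : ℝ) ^ (-s) := by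
  rw [zeta_eq_tsum_one_div_nat_cpow (by simpa)]
  have hterm (n : ℕ) : 1 / (n : ℂ) ^ (s : ℂ) = (((n : ℝ) ^ (-s) : ℝ) : ℂ) := by
    rw [rpow_neg n.cast_nonneg, Complex.ofReal_inv, Complex.ofReal_cpow n.cast_nonneg, one_div]
    norm_cast
  rw [tsum_congr hterm, ← Complex.ofReal_tsum, Complex.ofReal_re]

theorem riemannZeta_re_le_sum_range_add {s : ℝ} (hs : 1 < s) {N : ℕ} (hN : 0 < N) :
    (riemannZeta s).re ≤ ∑ n ∈ range (N + 1), (n : ℝ) ^ (-s) + (N : ℝ) ^ (1 - s) / (s - 1) := by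
  have hNpos : (0 : ℝ) < N := by exact_mod_cast hN
  have hsum : Summable fun n : ℕ ↦ (n : ℝ) ^ (-s) := summable_nat_rpow.2 (by linarith)
  have htail := AntitoneOn.tsum_comp_add_le_integral N (f := fun x : ℝ ↦ x ^ (-s))
    (fun x hx y _ hxy ↦ rpow_le_rpow_of_nonpos (hNpos.trans_le hx) hxy (by linarith))
    (integrableOn_Ioi_rpow_of_lt (by linarith) hNpos)
    (fun x hx ↦ rpow_nonneg (hNpos.trans hx).le _)
  rw [integral_Ioi_rpow_of_lt (by linarith) hNpos] at htail
  rw [riemannZeta_ofReal_re_eq_tsum hs, ← hsum.sum_add_tsum_nat_add (N + 1)]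
  gcongr
  calc ∑' i, ((i + (N + 1) : ℕ) : ℝ) ^ (-s) = ∑' i, ((i + N + 1 : ℕ) : ℝ) ^ (-s) := rfl
    _ ≤ _ := htail
    _ = (N : ℝ) ^ (1 - s) / (s - 1) := by
      rw [show -s + 1 = 1 - s by ring, neg_div, ← div_neg, neg_sub]

theorem riemannZeta_re_le_sum_Ico_ceil_add {s x : ℝ} (hs : 1 < s) (hx : 0 < x) :
    (riemannZeta s).re
      ≤ ∑ n ∈ Ico 1 ⌈x⌉₊, (n : ℝ) ^ (-s) + x ^ (-s) + x ^ (1 - s) / (s - 1) := by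
  set N := ⌈x⌉₊
  have hN : 0 < N := Nat.ceil_pos.2 hx
  have hxN : x ≤ N := Nat.le_ceil x
  have hsplit : ∑ n ∈ range (N + 1), (n : ℝ) ^ (-s)
      = ∑ n ∈ Ico 1 N, (n : ℝ) ^ (-s) + (N : ℝ) ^ (-s) := by
    rw [sum_range_succ, range_eq_Ico, sum_eq_sum_Ico_succ_bot hN]
    simp [zero_rpow (by linarith : -s ≠ 0)]
  calc (riemannZeta s).re
      ≤ ∑ n ∈ range (N + 1), (n : ℝ) ^ (-s) + (N : ℝ) ^ (1 - s) / (s - 1) :=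
        riemannZeta_re_le_sum_range_add hs hN
    _ ≤ _ := by
        rw [hsplit]
        gcongr _ + ?_ + ?_ / _
        all_goals exact rpow_le_rpow_of_nonpos hx hxN (by linarith)

theorem double_sum_bound (σ₀ T : ℝ) (h₁ : 1 / 2 < σ₀) (h₂ : σ₀ < 1) (hT : 2 ≤ T) :
    ∑ m ∈ Finset.Ico 1 ⌈T⌉₊, ∑ n ∈ Finset.Ico 1 m, ((n : ℝ) * m) ^ (-σ₀)
      ≤ T ^ (2 * (1 - σ₀)) / (2 * (1 - σ₀) ^ 2)
        - σ₀ * T ^ (1 - σ₀) / (1 - σ₀) ^ 2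
        + σ₀ ^ 2 / (2 * (1 - σ₀) ^ 2)
        - (riemannZeta (2 * σ₀)).re / 2
        - T ^ (1 - 2 * σ₀) / (2 * (1 - 2 * σ₀))
        + T ^ (-(2 * σ₀)) / 2 := by
  set S := ∑ i ∈ Ico 1 ⌈T⌉₊, (i : ℝ) ^ (-σ₀)
  set Q := ∑ i ∈ Ico 1 ⌈T⌉₊, (i : ℝ) ^ (-(2 * σ₀))
  have hsq (i : ℕ) : ((i : ℝ) ^ (-σ₀)) ^ 2 = (i : ℝ) ^ (-(2 * σ₀)) := by
    rw [← rpow_natCast, ← rpow_mul i.cast_nonneg]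
    congr 1; push_cast; ring
  have hLHS : ∑ m ∈ Ico 1 ⌈T⌉₊, ∑ n ∈ Ico 1 m, ((n : ℝ) * m) ^ (-σ₀) = (S ^ 2 - Q) / 2 := by
    have := two_mul_sum_Ico_sum_Ico_mul (fun n : ℕ ↦ (n : ℝ) ^ (-σ₀)) 1 ⌈T⌉₊
    simp only [← mul_rpow (Nat.cast_nonneg _) (Nat.cast_nonneg _), hsq] at this
    linarith
  have hS : S ^ 2 ≤ ((T ^ (1 - σ₀) - σ₀) / (1 - σ₀)) ^ 2 :=
    pow_le_pow_left₀ (sum_nonneg fun i _ ↦ rpow_nonneg i.cast_nonneg _)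
      (sum_Ico_ceil_rpow_neg_le (by linarith) h₂ (by linarith)) 2
  have hQ := riemannZeta_re_le_sum_Ico_ceil_add (s := 2 * σ₀) (by linarith) (by linarith : 0 < T)
  push_cast at hQ
  have hT2 : T ^ (2 * (1 - σ₀)) = (T ^ (1 - σ₀)) ^ 2 := by
    rw [mul_comm, rpow_mul (by linarith), rpow_two]
  have h1σ : 1 - σ₀ ≠ 0 := by linarith
  have h2σ : 1 - 2 * σ₀ ≠ 0 := by linarith
  rw [hLHS, hT2]
  calc (S ^ 2 - Q) / 2
      ≤ (((T ^ (1 - σ₀) - σ₀) / (1 - σ₀)) ^ 2 - ((riemannZeta (2 * σ₀)).re - T ^ (-(2 * σ₀))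
          - T ^ (1 - 2 * σ₀) / (2 * σ₀ - 1))) / 2 := by linarith
    _ = _ := by
      rw [show 2 * σ₀ - 1 = -(1 - 2 * σ₀) by ring, div_neg]
      field_simp
      ring
end

section
/- For real σ₀ with 1/2 < σ₀ < 1 and real T ≥ 2, one has ∑_{1 ≤ n < m < T} m^(1-2σ₀)/(m − n) ≤ (log T) T^(2(1-σ₀))/(2(1-σ₀)) + T^(2(1-σ₀))/(2(1-σ₀)) + log T + 1 − 1/(2(1-σ₀)) − (log T)/(2(1-σ₀)). -/
/-!
For fixed `m` the inner sum is `m ^ (1 - 2σ₀)` times the harmonic number `H_{m-1} ≤ 1 + log T`.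
Since `x ↦ x ^ (1 - 2σ₀)` is decreasing, comparison with `∫₁ᵀ x ^ (1 - 2σ₀) dx` bounds the
remaining sum by `1 + (T ^ c - 1) / c` with `c = 2(1 - σ₀)`, and
`(1 + log T) (1 + (T ^ c - 1) / c)` expands to the right-hand side.
-/

open Finset Real

lemma sum_Ico_one_inv_sub_eq_harmonic (m : ℕ) :
    ∑ n ∈ Ico 1 m, ((m : ℝ) - n)⁻¹ = harmonic (m - 1) := by
  rcases Nat.eq_zero_or_pos m with rfl | hm
  · simp
  have hreflect := sum_Ico_reflect (fun j ↦ ((j : ℕ) : ℝ)⁻¹) 1 (Nat.le_succ m)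
  rw [Nat.add_sub_cancel_left, Nat.add_sub_cancel] at hreflect
  rw [harmonic_eq_sum_Icc, Icc_sub_one_right_eq_Ico_of_not_isMin (by simpa using hm.ne')]
  push_cast
  rw [← hreflect]
  refine sum_congr rfl fun n hn ↦ ?_
  rw [Nat.cast_sub (mem_Ico.1 hn).2.le]

lemma harmonic_pred_le_one_add_log {m : ℕ} {T : ℝ} (hT : 1 ≤ T) (hm : (m : ℝ) ≤ T) :
    (harmonic (m - 1) : ℝ) ≤ 1 + log T := by
  refine (harmonic_le_one_add_log _).trans ?_
  gcongr 1 + ?_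
  rcases Nat.eq_zero_or_pos (m - 1) with h0 | h0
  · simpa [h0] using log_nonneg hT
  · exact log_le_log (by exact_mod_cast h0) ((Nat.cast_le.2 (m.sub_le 1)).trans hm)

theorem AntitoneOn.sum_Ico_one_le_add_integral {f : ℝ → ℝ} {N : ℕ} (hN : 1 ≤ N)
    (hf : AntitoneOn f (Set.Icc 1 N)) :
    ∑ m ∈ Ico 1 (N + 1), f m ≤ f 1 + ∫ x in (1 : ℝ)..N, f x := by
  rw [sum_eq_sum_Ico_succ_bot (by omega), ← sum_Ico_add' _ 1 N 1, Nat.cast_one]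
  gcongr
  simpa using AntitoneOn.sum_le_integral_Ico (a := 1) hN (by simpa using hf)

lemma sum_Ico_one_ceil_rpow_le {a T : ℝ} (ha₁ : -1 < a) (ha₀ : a ≤ 0) (hT : 1 ≤ T) :
    ∑ m ∈ Ico 1 ⌈T⌉₊, (m : ℝ) ^ a ≤ 1 + (T ^ (a + 1) - 1) / (a + 1) := by
  have hpos : 0 < a + 1 := by linarith
  obtain ⟨N, hN⟩ : ∃ N, ⌈T⌉₊ = N + 1 := Nat.exists_eq_add_one.2 (Nat.ceil_pos.2 (by linarith))
  have hNT : (N : ℝ) ≤ T := (Nat.lt_ceil.1 (by omega)).le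
  rcases Nat.eq_zero_or_pos N with rfl | hN₁
  · have hrem : 0 ≤ (T ^ (a + 1) - 1) / (a + 1) :=
      div_nonneg (sub_nonneg.2 (one_le_rpow hT hpos.le)) hpos.le
    simp only [hN, Ico_self, sum_empty]
    linarith
  have hanti : AntitoneOn (fun x : ℝ ↦ x ^ a) (Set.Icc 1 N) := fun x hx y _ hxy ↦
    rpow_le_rpow_of_nonpos (by linarith [hx.1]) hxy ha₀
  calc ∑ m ∈ Ico 1 ⌈T⌉₊, (m : ℝ) ^ a
      ≤ 1 ^ a + ∫ x in (1 : ℝ)..N, x ^ a := hN ▸ hanti.sum_Ico_one_le_add_integral hN₁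
    _ = 1 + ((N : ℝ) ^ (a + 1) - 1) / (a + 1) := by
      rw [integral_rpow (Or.inl ha₁), one_rpow, one_rpow]
    _ ≤ 1 + (T ^ (a + 1) - 1) / (a + 1) := by gcongr

theorem off_diagonal_sum_bound (σ₀ T : ℝ) (h₁ : 1 / 2 < σ₀) (h₂ : σ₀ < 1) (hT : 2 ≤ T) :
    ∑ m ∈ Finset.Ico 1 ⌈T⌉₊, ∑ n ∈ Finset.Ico 1 m, (m : ℝ) ^ (1 - 2 * σ₀) / ((m : ℝ) - n)
      ≤ Real.log T * T ^ (2 * (1 - σ₀)) / (2 * (1 - σ₀))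
        + T ^ (2 * (1 - σ₀)) / (2 * (1 - σ₀))
        + Real.log T + 1 - 1 / (2 * (1 - σ₀)) - Real.log T / (2 * (1 - σ₀)) := by
  have hT₁ : 1 ≤ T := by linarith
  have hexp : 1 - 2 * σ₀ + 1 = 2 * (1 - σ₀) := by ring
  have hinner : ∀ m ∈ Ico 1 ⌈T⌉₊, ∑ n ∈ Ico 1 m, (m : ℝ) ^ (1 - 2 * σ₀) / ((m : ℝ) - n)
      ≤ (m : ℝ) ^ (1 - 2 * σ₀) * (1 + log T) := fun m hm ↦ by
    simp only [div_eq_mul_inv, ← mul_sum, sum_Ico_one_inv_sub_eq_harmonic]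
    exact mul_le_mul_of_nonneg_left
      (harmonic_pred_le_one_add_log hT₁ (Nat.lt_ceil.1 (mem_Ico.1 hm).2).le) (by positivity)
  calc _ ≤ ∑ m ∈ Ico 1 ⌈T⌉₊, (m : ℝ) ^ (1 - 2 * σ₀) * (1 + log T) := sum_le_sum hinner
    _ = (1 + log T) * ∑ m ∈ Ico 1 ⌈T⌉₊, (m : ℝ) ^ (1 - 2 * σ₀) := by rw [← sum_mul, mul_comm]
    _ ≤ (1 + log T) * (1 + (T ^ (2 * (1 - σ₀)) - 1) / (2 * (1 - σ₀))) := by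
      gcongr
      · linarith [log_nonneg hT₁]
      · simpa only [hexp] using
          sum_Ico_one_ceil_rpow_le (a := 1 - 2 * σ₀) (by linarith) (by linarith) hT₁
    _ = _ := by field_simp; ring
end

section
/- The function σ₀ ↦ (1 − 3σ₀ + 3σ₀²)/(2(1−σ₀)²) − ζ(2σ₀)/2 on (1/2, 1) changes sign exactly once, and in particular it is negative for σ₀ ∈ (0.52, 0.67) and positive for σ₀ ∈ (0.68, 0.97). -/
/-!
The rational part `(1 - 3x + 3x²) / (2(1 - x)²)` increases on `(1/2, 1)` while `ζ(2x)` decreases,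
so the function is strictly increasing there; it therefore changes sign exactly once as soon as it
is negative at `0.67` and positive at `0.68`, i.e. as soon as `ζ(1.34) > 3367/1089` and
`ζ(1.36) < 3.3906`. Both bounds compare `∑ n^(-s)` with `∫ t^(-s) dt`: as `t^(-s)` decreases,
`n^(-s) ≥ ∫_n^(n+1) t^(-s) dt`, and as it is convex, `n^(-s) ≤ ∫_(n-1/2)^(n+1/2) t^(-s) dt`.
The integrals telescope, leaving a few explicit powers to bound by rationals.
-/

open Real Set Filter Topology MeasureTheory

theorem convexOn_rpow_neg {p : ℝ} (hp : 0 ≤ p) : ConvexOn ℝ (Ioi 0) fun x : ℝ ↦ x ^ (-p) := by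
  refine ⟨convex_Ioi 0, fun x (hx : 0 < x) y (hy : 0 < y) a b ha hb hab ↦ ?_⟩
  simp only [smul_eq_mul]
  calc (a * x + b * y) ^ (-p) ≤ (x ^ a * y ^ b) ^ (-p) :=
        rpow_le_rpow_of_nonpos (by positivity)
          (geom_mean_le_arith_mean2_weighted ha hb hx.le hy.le hab) (by linarith)
    _ = (x ^ (-p)) ^ a * (y ^ (-p)) ^ b := by
        rw [mul_rpow (by positivity) (by positivity), ← rpow_mul hx.le, ← rpow_mul hy.le,
          ← rpow_mul hx.le, ← rpow_mul hy.le, mul_comm a, mul_comm b]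
    _ ≤ a * x ^ (-p) + b * y ^ (-p) :=
        geom_mean_le_arith_mean2_weighted ha hb (by positivity) (by positivity) hab

theorem ConvexOn.sub_mul_midpoint_le_integral {f : ℝ → ℝ} {a b : ℝ} (hab : a ≤ b)
    (hf : ConvexOn ℝ (Icc a b) f) (hint : IntervalIntegrable f volume a b) :
    (b - a) * f ((a + b) / 2) ≤ ∫ x in a..b, f x := by
  have hint' : IntervalIntegrable (fun x ↦ f (a + b - x)) volume a b := by
    simpa using hint.symm.comp_sub_left (a + b)
  have hreflect : ∫ x in a..b, f (a + b - x) = ∫ x in a..b, f x := by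
    simp [intervalIntegral.integral_comp_sub_left]
  have hmid : ∀ x ∈ Icc a b, 2 * f ((a + b) / 2) ≤ f x + f (a + b - x) := by
    intro x hx
    have hx' : a + b - x ∈ Icc a b := ⟨by linarith [hx.2], by linarith [hx.1]⟩
    have := hf.2 hx hx' (by norm_num : (0 : ℝ) ≤ 1 / 2) (by norm_num : (0 : ℝ) ≤ 1 / 2)
      (by norm_num)
    simp only [smul_eq_mul] at this
    rw [show 1 / 2 * x + 1 / 2 * (a + b - x) = (a + b) / 2 by ring] at this
    linarith
  have := intervalIntegral.integral_mono_on hab intervalIntegrable_const (hint.add hint') hmid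
  rw [intervalIntegral.integral_const, intervalIntegral.integral_add hint hint', hreflect,
    smul_eq_mul] at this
  linarith

theorem tsum_le_of_le_sub_succ {f g : ℕ → ℝ} (hf : ∀ n, 0 ≤ f n) (hg : ∀ n, 0 ≤ g n)
    (h : ∀ n, f n ≤ g n - g (n + 1)) : ∑' n, f n ≤ g 0 :=
  Real.tsum_le_of_sum_range_le hf fun n ↦
    (Finset.sum_le_sum fun i _ ↦ h i).trans (by rw [Finset.sum_range_sub']; linarith [hg n])

theorem le_tsum_of_sub_succ_le {f g : ℕ → ℝ} (hf : Summable f) (hg : Tendsto g atTop (𝓝 0))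
    (h : ∀ n, g n - g (n + 1) ≤ f n) : g 0 ≤ ∑' n, f n := by
  have hlim : Tendsto (fun n ↦ g 0 - g n) atTop (𝓝 (g 0)) := by
    simpa using (tendsto_const_nhds (x := g 0)).sub hg
  refine le_of_tendsto_of_tendsto' hlim hf.hasSum.tendsto_sum_nat fun n ↦ ?_
  rw [← Finset.sum_range_sub']
  exact Finset.sum_le_sum fun i _ ↦ h i

theorem integral_rpow_neg {s a b : ℝ} (hs : s ≠ 1) (ha : 0 < a) (hab : a ≤ b) :
    ∫ x in a..b, x ^ (-s) = (a ^ (1 - s) - b ^ (1 - s)) / (s - 1) := by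
  rw [integral_rpow (Or.inr ⟨by contrapose! hs; linarith, ?_⟩)]
  · rw [show -s + 1 = 1 - s by ring, ← neg_div_neg_eq, neg_sub, neg_sub]
  · rw [uIcc_of_le hab]
    exact fun h ↦ (ha.trans_le h.1).false

theorem rpow_neg_le_integral_midpoint {s x : ℝ} (hs : 0 ≤ s) (hx : 1 / 2 < x) :
    x ^ (-s) ≤ ∫ t in (x - 1 / 2)..(x + 1 / 2), t ^ (-s) := by
  have hpos : Icc (x - 1 / 2) (x + 1 / 2) ⊆ Ioi 0 := fun t ht ↦ by
    rw [mem_Ioi]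
    linarith [ht.1]
  have hint : IntervalIntegrable (fun t : ℝ ↦ t ^ (-s)) volume (x - 1 / 2) (x + 1 / 2) :=
    (continuousOn_id.rpow_const fun t ht ↦ Or.inl (hpos ht).ne').intervalIntegrable_of_Icc
      (by linarith)
  have := ((convexOn_rpow_neg hs).subset hpos (convex_Icc _ _)).sub_mul_midpoint_le_integral
    (by linarith) hint
  rwa [show x + 1 / 2 - (x - 1 / 2) = 1 by ring, show (x - 1 / 2 + (x + 1 / 2)) / 2 = x by ring,
    one_mul] at this

theorem integral_le_rpow_neg {s x : ℝ} (hs : 0 ≤ s) (hx : 0 < x) :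
    ∫ t in x..(x + 1), t ^ (-s) ≤ x ^ (-s) := by
  have hint : IntervalIntegrable (fun t : ℝ ↦ t ^ (-s)) volume x (x + 1) :=
    (continuousOn_id.rpow_const fun t ht ↦ Or.inl (hx.trans_le ht.1).ne').intervalIntegrable_of_Icc
      (by linarith)
  have := intervalIntegral.integral_mono_on (by linarith) hint intervalIntegrable_const
    fun t (ht : t ∈ Icc x (x + 1)) ↦ rpow_le_rpow_of_nonpos hx ht.1 (neg_nonpos.2 hs)
  simpa using this

theorem summable_nat_add_one_rpow_neg {s : ℝ} (hs : 1 < s) :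
    Summable fun n : ℕ ↦ ((n : ℝ) + 1) ^ (-s) := by
  convert (Real.summable_one_div_nat_add_rpow 1 s).mpr hs using 2 with n
  rw [abs_of_nonneg (by positivity), rpow_neg (by positivity), one_div]

theorem riemannZeta_ofReal_re {s : ℝ} (hs : 1 < s) :
    (riemannZeta s).re = ∑' n : ℕ, ((n : ℝ) + 1) ^ (-s) := by
  rw [zeta_eq_tsum_one_div_nat_add_one_cpow (by simpa using hs), ← Complex.ofReal_re (∑' _, _),
    Complex.ofReal_tsum]
  congr 2 with n
  rw [Complex.ofReal_cpow (by positivity), Complex.ofReal_neg, Complex.cpow_neg, one_div]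
  push_cast
  rfl

theorem riemannZeta_ofReal_re_strictAntiOn :
    StrictAntiOn (fun s : ℝ ↦ (riemannZeta s).re) (Ioi 1) := by
  intro s (hs : 1 < s) t (ht : 1 < t) hst
  simp only [riemannZeta_ofReal_re hs, riemannZeta_ofReal_re ht]
  refine Summable.tsum_lt_tsum (i := 1) (fun n ↦ ?_) ?_ (summable_nat_add_one_rpow_neg ht)
    (summable_nat_add_one_rpow_neg hs)
  · exact rpow_le_rpow_of_exponent_le (by simp) (by linarith)
  · exact rpow_lt_rpow_of_exponent_lt (by norm_num) (by linarith)

theorem riemannZeta_ofReal_re_le {s : ℝ} (hs : 1 < s) (N : ℕ) :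
    (riemannZeta s).re ≤
      ∑ n ∈ Finset.range N, ((n : ℝ) + 1) ^ (-s) + ((N : ℝ) + 1 / 2) ^ (1 - s) / (s - 1) := by
  rw [riemannZeta_ofReal_re hs, ← (summable_nat_add_one_rpow_neg hs).sum_add_tsum_nat_add N]
  gcongr
  refine (tsum_le_of_le_sub_succ (f := fun n : ℕ ↦ (((n + N : ℕ) : ℝ) + 1) ^ (-s))
    (g := fun n : ℕ ↦ ((n + N : ℝ) + 1 / 2) ^ (1 - s) / (s - 1))
    (fun n ↦ by positivity) (fun n ↦ by positivity) fun n ↦ ?_).trans_eq (by simp)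
  have hnN : (0 : ℝ) ≤ n + N := by positivity
  have := rpow_neg_le_integral_midpoint (x := (n + N : ℝ) + 1) (by linarith) (by linarith)
  rw [integral_rpow_neg hs.ne' (by linarith) (by linarith)] at this
  push_cast
  rw [← sub_div]
  convert this using 4 <;> ring

theorem le_riemannZeta_ofReal_re {s : ℝ} (hs : 1 < s) (N : ℕ) :
    ∑ n ∈ Finset.range N, ((n : ℝ) + 1) ^ (-s) + ((N : ℝ) + 1) ^ (1 - s) / (s - 1) ≤
      (riemannZeta s).re := by
  rw [riemannZeta_ofReal_re hs, ← (summable_nat_add_one_rpow_neg hs).sum_add_tsum_nat_add N]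
  gcongr
  refine (le_tsum_of_sub_succ_le (g := fun n : ℕ ↦ ((n + N : ℝ) + 1) ^ (1 - s) / (s - 1))
    ((summable_nat_add_iff N).mpr (summable_nat_add_one_rpow_neg hs)) ?_ fun n ↦ ?_).trans_eq'
    (by simp)
  · have h := (tendsto_rpow_neg_atTop (sub_pos.2 hs)).comp <| tendsto_atTop_add_const_right _ 1 <|
      tendsto_atTop_add_const_right _ (N : ℝ) tendsto_natCast_atTop_atTop
    simpa [Function.comp_def] using h.div_const (s - 1)
  · have := integral_le_rpow_neg (x := (n + N : ℝ) + 1) (by linarith) (by positivity)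
    rw [integral_rpow_neg hs.ne' (by positivity) (by linarith)] at this
    push_cast
    rw [← sub_div]
    convert this using 4
    ring

theorem rpow_neg_le_of_one_le_pow_mul_pow {x q p : ℝ} {u v : ℕ} (hx : 0 < x) (hq : 0 ≤ q)
    (hv : v ≠ 0) (hpv : p * v = u) (h : 1 ≤ q ^ v * x ^ u) : x ^ (-p) ≤ q := by
  rw [← pow_le_pow_iff_left₀ (by positivity) hq hv, ← rpow_natCast, ← rpow_mul hx.le, neg_mul,
    hpv, rpow_neg hx.le, rpow_natCast, inv_le_iff_one_le_mul₀ (by positivity)]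
  linarith

theorem le_rpow_neg_of_pow_mul_pow_le_one {x q p : ℝ} {u v : ℕ} (hx : 0 < x) (hq : 0 ≤ q)
    (hv : v ≠ 0) (hpv : p * v = u) (h : q ^ v * x ^ u ≤ 1) : q ≤ x ^ (-p) := by
  rw [← pow_le_pow_iff_left₀ hq (by positivity) hv, ← rpow_natCast (x ^ (-p)), ← rpow_mul hx.le,
    neg_mul, hpv, rpow_neg hx.le, rpow_natCast, ← one_div, le_div_iff₀ (by positivity)]
  exact h

theorem strictMonoOn_div_two_mul_one_sub_sq :
    StrictMonoOn (fun x : ℝ ↦ (1 - 3 * x + 3 * x ^ 2) / (2 * (1 - x) ^ 2)) (Ioo (1 / 3) 1) := by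
  rintro a ⟨ha, ha'⟩ b ⟨hb, hb'⟩ hab
  rw [div_lt_div_iff₀ (by nlinarith) (by nlinarith)]
  have hpos : 0 < (1 - a) + (1 - b) - 3 * ((1 - a) * (1 - b)) := by nlinarith
  nlinarith [mul_pos (sub_pos.2 hab) hpos]

theorem StrictMonoOn.exists_sign_change {f : ℝ → ℝ} {a b c d : ℝ}
    (hf : StrictMonoOn f (Ioo a b)) (hc : c ∈ Ioo a b) (hd : d ∈ Ioo a b) (hfc : f c < 0)
    (hfd : 0 < f d) : ∃ m ∈ Ioo a b, (∀ x ∈ Ioo a m, f x < 0) ∧ ∀ x ∈ Ioo m b, 0 < f x := by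
  set S := {x ∈ Ioo a b | f x ≤ 0}
  have hcS : c ∈ S := ⟨hc, hfc.le⟩
  have hSd : ∀ y ∈ S, y ≤ d := fun y hy ↦ by
    by_contra! hdy
    exact (hfd.trans (hf hd hy.1 hdy)).not_ge hy.2
  have hbdd : BddAbove S := ⟨d, hSd⟩
  have hcm : c ≤ sSup S := le_csSup hbdd hcS
  have hmd : sSup S ≤ d := csSup_le ⟨c, hcS⟩ hSd
  refine ⟨sSup S, ⟨hc.1.trans_le hcm, hmd.trans_lt hd.2⟩, fun x hx ↦ ?_, fun x hx ↦ ?_⟩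
  · obtain ⟨y, hyS, hxy⟩ := exists_lt_of_lt_csSup ⟨c, hcS⟩ hx.2
    exact (hf ⟨hx.1, hxy.trans hyS.1.2⟩ hyS.1 hxy).trans_le hyS.2
  · by_contra! hfx
    exact hx.1.not_ge (le_csSup hbdd ⟨⟨hc.1.trans (hcm.trans_lt hx.1), hx.2⟩, hfx⟩)

noncomputable def e12 (x : ℝ) : ℝ :=
  (1 - 3 * x + 3 * x ^ 2) / (2 * (1 - x) ^ 2) - (riemannZeta ((2 * x : ℝ) : ℂ)).re / 2

theorem e12_strictMonoOn : StrictMonoOn e12 (Ioo (1 / 2) 1) := by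
  intro a ha b hb hab
  have hrat := strictMonoOn_div_two_mul_one_sub_sq ⟨by linarith [ha.1], ha.2⟩
    ⟨by linarith [hb.1], hb.2⟩ hab
  have hζ := riemannZeta_ofReal_re_strictAntiOn (mem_Ioi.2 (by linarith [ha.1] : 1 < 2 * a))
    (mem_Ioi.2 (by linarith [hb.1] : 1 < 2 * b)) (by linarith)
  simp only at hrat hζ
  rw [e12, e12]
  linarith

theorem e12_067_lt_zero : e12 0.67 < 0 := by
  have hζ := le_riemannZeta_ofReal_re (s := 1.34) (by norm_num) 1
  have h2 : (3 / 4 : ℝ) ≤ 2 ^ (-(0.34 : ℝ)) :=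
    le_rpow_neg_of_pow_mul_pow_le_one (u := 17) (v := 50) (by norm_num) (by norm_num)
      (by norm_num) (by norm_num) (by norm_num)
  norm_num at hζ
  rw [e12, show (2 * 0.67 : ℝ) = 1.34 by norm_num]
  norm_num
  linarith

-- Three exact terms are needed: with two, the midpoint bound `3.3869` is too close to `3.3906`.
theorem e12_068_pos : 0 < e12 0.68 := by
  have hζ := riemannZeta_ofReal_re_le (s := 1.36) (by norm_num) 3
  have h2 : (2 : ℝ) ^ (-(1.36 : ℝ)) ≤ 0.3897 :=
    rpow_neg_le_of_one_le_pow_mul_pow (u := 34) (v := 25) (by norm_num) (by norm_num)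
      (by norm_num) (by norm_num) (by norm_num)
  have h3 : (3 : ℝ) ^ (-(1.36 : ℝ)) ≤ 0.2245 :=
    rpow_neg_le_of_one_le_pow_mul_pow (u := 34) (v := 25) (by norm_num) (by norm_num)
      (by norm_num) (by norm_num) (by norm_num)
  have h72 : (7 / 2 : ℝ) ^ (-(0.36 : ℝ)) ≤ 0.6371 :=
    rpow_neg_le_of_one_le_pow_mul_pow (u := 9) (v := 25) (by norm_num) (by norm_num)
      (by norm_num) (by norm_num) (by norm_num)
  norm_num [Finset.sum_range_succ] at hζ
  rw [e12, show (2 * 0.68 : ℝ) = 1.36 by norm_num]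
  norm_num
  linarith

theorem sign_change_E12 :
    (∃ c ∈ Set.Ioo (1 / 2 : ℝ) 1,
      (∀ x ∈ Set.Ioo (1 / 2 : ℝ) c,
          (1 - 3 * x + 3 * x ^ 2) / (2 * (1 - x) ^ 2) - (riemannZeta ((2 * x : ℝ) : ℂ)).re / 2 < 0) ∧
      (∀ x ∈ Set.Ioo c (1 : ℝ),
          0 < (1 - 3 * x + 3 * x ^ 2) / (2 * (1 - x) ^ 2) - (riemannZeta ((2 * x : ℝ) : ℂ)).re / 2)) ∧
    (∀ x ∈ Set.Ioo (0.52 : ℝ) 0.67,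
        (1 - 3 * x + 3 * x ^ 2) / (2 * (1 - x) ^ 2) - (riemannZeta ((2 * x : ℝ) : ℂ)).re / 2 < 0) ∧
    (∀ x ∈ Set.Ioo (0.68 : ℝ) 0.97,
        0 < (1 - 3 * x + 3 * x ^ 2) / (2 * (1 - x) ^ 2) - (riemannZeta ((2 * x : ℝ) : ℂ)).re / 2) := by
  have h067 : (0.67 : ℝ) ∈ Ioo (1 / 2) 1 := by norm_num
  have h068 : (0.68 : ℝ) ∈ Ioo (1 / 2) 1 := by norm_num
  refine ⟨e12_strictMonoOn.exists_sign_change h067 h068 e12_067_lt_zero e12_068_pos,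
    fun x hx ↦ ?_, fun x hx ↦ ?_⟩
  · exact (e12_strictMonoOn ⟨by linarith [hx.1], by linarith [hx.2]⟩ h067 hx.2).trans
      e12_067_lt_zero
  · exact e12_068_pos.trans
      (e12_strictMonoOn h068 ⟨by linarith [hx.1], by linarith [hx.2]⟩ hx.1)
end
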